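/- For every s ≥ 0, the normalizing constant of the matrix Fisher distribution with parameter sI₃ is c(sI₃) = ∫_{SO(3)} exp(s · tr(R)) dR = (e^s/π) ∫₀^π exp(2s cos ρ)(1 − cos ρ) dρ; equivalently, c(sI₃) = e^s (I₀(2s) − I₁(2s)). -/

import Mathlib

/-!
The trace moments `mₙ = ∫ (tr R)ⁿ dR` determine `c(sI₃) = ∑ sⁿ/n! mₙ`, because `tr` is bounded
on `SO(3)`. Left invariance makes `u ↦ ∫ (tr (Q_u R))^(k+1) dR` constant along the rotations
`Q_u` about each coordinate axis. Its second derivative at `u = 0`, summed over the three axes,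
is the Laplacian of `tr^(k+1)` on `SO(3)` and yields `(k + 2) mₖ₊₁ = k (2 mₖ + 3 mₖ₋₁)`, while
`m₀ = 1`. The moments of `1 + 2 cos ρ` for the density `(1 - cos ρ)/π` on `[0, π]` satisfy the
same recurrence (integration by parts), so the two exponential integrals coincide.
-/

open MeasureTheory Matrix Real

noncomputable section

/-- The space of real 3×3 matrices. -/
abbrev M3 : Type := Matrix (Fin 3) (Fin 3) ℝ

instance : MeasurableSpace M3 := inferInstanceAs (MeasurableSpace (Fin 3 → Fin 3 → ℝ))

/-- The special orthogonal group SO(3), as a set of real 3×3 matrices. -/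
def SO3 : Set M3 := {R | Rᵀ * R = 1 ∧ R.det = 1}

/-- The normalizing constant of the matrix Fisher distribution,
`c(F) = ∫_{SO(3)} exp(tr(Fᵀ R)) dR`. -/
noncomputable def mfC (μ : Measure M3) (F : M3) : ℝ :=
  ∫ R, Real.exp (Fᵀ * R).trace ∂μ

/-- The modified Bessel function of the first kind of order zero,
`I₀(x) = (1/π) ∫₀^π exp(x cos θ) dθ`. -/
noncomputable def besselI0 (x : ℝ) : ℝ :=
  (1 / Real.pi) * ∫ θ in (0:ℝ)..Real.pi, Real.exp (x * Real.cos θ)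

/-- The modified Bessel function of the first kind of order one,
`I₁(x) = (1/π) ∫₀^π cos θ · exp(x cos θ) dθ`. -/
noncomputable def besselI1 (x : ℝ) : ℝ :=
  (1 / Real.pi) * ∫ θ in (0:ℝ)..Real.pi, Real.cos θ * Real.exp (x * Real.cos θ)

open Filter
open scoped Nat

section FiniteMeasure

variable {α : Type*} [MeasurableSpace α] {ν : Measure α} [IsFiniteMeasure ν]
  {g : α → ℝ} {C : ℝ}

lemma integrable_pow_of_ae_abs_le (hg : AEStronglyMeasurable g ν) (hgC : ∀ᵐ x ∂ν, |g x| ≤ C)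
    (n : ℕ) : Integrable (fun x => g x ^ n) ν :=
  Integrable.of_bound (hg.pow n) (C ^ n) <| hgC.mono fun x hx => by
    rw [norm_pow, Real.norm_eq_abs]
    exact pow_le_pow_left₀ (abs_nonneg _) hx n

lemma integral_exp_mul_eq_tsum (hg : AEStronglyMeasurable g ν) (hgC : ∀ᵐ x ∂ν, |g x| ≤ C)
    (s : ℝ) : ∫ x, exp (s * g x) ∂ν = ∑' n : ℕ, s ^ n / n ! * ∫ x, g x ^ n ∂ν := by
  have hterm (n : ℕ) : (fun x => (s * g x) ^ n / n !) = fun x => s ^ n / n ! * g x ^ n := by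
    funext x; ring
  have hint (n : ℕ) : Integrable (fun x => (s * g x) ^ n / n !) ν := by
    rw [hterm]; exact (integrable_pow_of_ae_abs_le hg hgC n).const_mul _
  have hnorm (n : ℕ) :
      ∫ x, ‖(s * g x) ^ n / (n ! : ℝ)‖ ∂ν ≤ (|s| * C) ^ n / n ! * ν.real Set.univ := by
    refine (integral_mono_ae (g := fun _ => (|s| * C) ^ n / n !) (hint n).norm
      (integrable_const _) ?_).trans_eq (by simp [mul_comm])
    filter_upwards [hgC] with x hx
    rw [norm_div, norm_pow, Real.norm_eq_abs, Real.norm_natCast, abs_mul]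
    gcongr
  have hsum : Summable fun n : ℕ => ∫ x, ‖(s * g x) ^ n / (n ! : ℝ)‖ ∂ν :=
    Summable.of_nonneg_of_le (fun n => integral_nonneg fun x => norm_nonneg _) hnorm
      ((Real.summable_pow_div_factorial _).mul_right _)
  simp_rw [Real.exp_eq_exp_ℝ, NormedSpace.exp_eq_tsum_div]
  rw [← integral_tsum_of_summable_integral_norm hint hsum]
  congr 1; funext n
  rw [hterm, integral_const_mul]

lemma integral_pow_recurrence_of_integral_eq_zero (hg : AEStronglyMeasurable g ν)
    (hgC : ∀ᵐ x ∂ν, |g x| ≤ C) (k : ℕ) (h : ∫ x, (k * g x ^ (k - 1) * (3 + 2 * g x - g x ^ 2) - 2 * g x ^ (k + 1)) ∂ν = 0) :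
    ((k : ℝ) + 2) * ∫ x, g x ^ (k + 1) ∂ν
      = k * (2 * ∫ x, g x ^ k ∂ν + 3 * ∫ x, g x ^ (k - 1) ∂ν) := by
  have hI (n : ℕ) (a : ℝ) : Integrable (fun x => a * g x ^ n) ν :=
    (integrable_pow_of_ae_abs_le hg hgC n).const_mul a
  have hpt : (fun x => k * g x ^ (k - 1) * (3 + 2 * g x - g x ^ 2) - 2 * g x ^ (k + 1))
      = fun x => 3 * k * g x ^ (k - 1) + 2 * k * g x ^ k - (k + 2) * g x ^ (k + 1) := by
    funext x
    rcases k with _ | k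
    · simp
    · simp only [Nat.add_sub_cancel, pow_succ]; push_cast; ring
  rw [hpt, integral_sub, integral_add, integral_const_mul, integral_const_mul,
    integral_const_mul] at h
  · linarith
  all_goals first | exact hI _ _ | exact (hI _ _).add (hI _ _)

end FiniteMeasure

section CompactlyCarried

variable {X : Type*} [TopologicalSpace X] [MeasurableSpace X] [OpensMeasurableSpace X]
  {ν : Measure X} [IsFiniteMeasure ν] {K : Set X}

lemma Continuous.integrable_of_ae_mem_isCompact (hK : IsCompact K) (hνK : ∀ᵐ x ∂ν, x ∈ K)
    {f : X → ℝ} (hf : Continuous f) : Integrable f ν :=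
  have ⟨C, hC⟩ := hK.exists_bound_of_continuousOn hf.continuousOn
  Integrable.of_bound hf.aestronglyMeasurable C (hνK.mono hC)

variable {F F' : ℝ → X → ℝ}

lemma hasDerivAt_integral_of_ae_mem_isCompact (hK : IsCompact K) (hνK : ∀ᵐ x ∂ν, x ∈ K)
    (hF : Continuous fun p : ℝ × X => F p.1 p.2) (hF' : Continuous fun p : ℝ × X => F' p.1 p.2)
    (hderiv : ∀ u x, HasDerivAt (F · x) (F' u x) u) (u₀ : ℝ) :
    HasDerivAt (fun u => ∫ x, F u x ∂ν) (∫ x, F' u₀ x ∂ν) u₀ := by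
  have hFu (u : ℝ) : Continuous (F u) := hF.comp (Continuous.prodMk_right u)
  obtain ⟨C, hC⟩ :=
    ((isCompact_closedBall u₀ 1).prod hK).exists_bound_of_continuousOn hF'.continuousOn
  refine (hasDerivAt_integral_of_dominated_loc_of_deriv_le (bound := fun _ => C)
    (Metric.closedBall_mem_nhds u₀ one_pos)
    (Eventually.of_forall fun u => (hFu u).aestronglyMeasurable)
    ((hFu u₀).integrable_of_ae_mem_isCompact hK hνK)
    (hF'.comp (Continuous.prodMk_right u₀)).aestronglyMeasurable ?_ (integrable_const C)
    (ae_of_all _ fun x u _ => hderiv u x)).2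
  filter_upwards [hνK] with x hx u hu using hC (u, x) ⟨hu, hx⟩

lemma integral_deriv_eq_zero_of_integral_const (hK : IsCompact K)
    (hνK : ∀ᵐ x ∂ν, x ∈ K) (hF : Continuous fun p : ℝ × X => F p.1 p.2)
    (hF' : Continuous fun p : ℝ × X => F' p.1 p.2)
    (hderiv : ∀ u x, HasDerivAt (F · x) (F' u x) u)
    (hconst : ∀ u, ∫ x, F u x ∂ν = ∫ x, F 0 x ∂ν) (u₀ : ℝ) : ∫ x, F' u₀ x ∂ν = 0 := by
  refine (hasDerivAt_integral_of_ae_mem_isCompact hK hνK hF hF' hderiv u₀).unique ?_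
  rw [funext hconst]
  exact hasDerivAt_const _ _

/-- The integrand is `(k + 1)⁻¹ ∂²/∂u² (a + b cos u + c sin u)^(k+1)` at `u = 0`. -/
lemma integral_trig_second_variation_eq_zero (hK : IsCompact K) (hνK : ∀ᵐ x ∂ν, x ∈ K)
    {a b c : X → ℝ} (ha : Continuous a) (hb : Continuous b) (hc : Continuous c) (k : ℕ)
    (hconst : ∀ u, ∫ x, (a x + cos u * b x + sin u * c x) ^ (k + 1) ∂ν
      = ∫ x, (a x + b x) ^ (k + 1) ∂ν) :
    ∫ x, (k * (a x + b x) ^ (k - 1) * c x ^ 2 - (a x + b x) ^ k * b x) ∂ν = 0 := by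
  set ψ : ℝ → X → ℝ := fun u x => a x + cos u * b x + sin u * c x
  set ψ' : ℝ → X → ℝ := fun u x => -sin u * b x + cos u * c x
  have hψ (u : ℝ) (x : X) : HasDerivAt (ψ · x) (ψ' u x) u := by
    refine (((hasDerivAt_cos u).mul_const (b x)).const_add (a x) |>.add
      ((hasDerivAt_sin u).mul_const (c x))).congr_deriv ?_
    ring
  have hψ' (u : ℝ) (x : X) : HasDerivAt (ψ' · x) (a x - ψ u x) u := by
    refine (((hasDerivAt_sin u).neg.mul_const (b x)).add
      ((hasDerivAt_cos u).mul_const (c x))).congr_deriv ?_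
    simp only [ψ]; ring
  set F1 : ℝ → X → ℝ := fun u x => (k + 1) * (ψ u x ^ k * ψ' u x)
  have hF (u : ℝ) (x : X) : HasDerivAt (ψ · x ^ (k + 1)) (F1 u x) u := by
    refine ((hψ u x).pow (k + 1)).congr_deriv ?_
    push_cast; ring
  have hF1 (u : ℝ) (x : X) : HasDerivAt (F1 · x)
      ((k + 1) * (k * ψ u x ^ (k - 1) * ψ' u x * ψ' u x + ψ u x ^ k * (a x - ψ u x))) u :=
    (((hψ u x).pow k).mul (hψ' u x)).const_mul _
  have hF1_zero (u : ℝ) : ∫ x, F1 u x ∂ν = 0 :=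
    integral_deriv_eq_zero_of_integral_const hK hνK (by fun_prop) (by fun_prop) hF
      (fun u => by simp [ψ, hconst]) u
  have h := integral_deriv_eq_zero_of_integral_const hK hνK (by fun_prop) (by fun_prop)
    hF1 (fun u => by rw [hF1_zero, hF1_zero]) 0
  have h0 : ∀ x, (k + 1) * (k * ψ 0 x ^ (k - 1) * ψ' 0 x * ψ' 0 x + ψ 0 x ^ k * (a x - ψ 0 x))
      = (k + 1) * (k * (a x + b x) ^ (k - 1) * c x ^ 2 - (a x + b x) ^ k * b x) := fun x => by
    simp only [ψ, ψ', cos_zero, sin_zero]; ring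
  simp only [h0, integral_const_mul] at h
  exact (mul_eq_zero.1 h).resolve_left (by positivity)

end CompactlyCarried

/-- The index `k - 1` truncates at `k = 0`, where its coefficient vanishes: that case says
`M 1 = 0`. -/
def IsSO3TraceMoments (M : ℕ → ℝ) : Prop :=
  M 0 = 1 ∧ ∀ k : ℕ, ((k : ℝ) + 2) * M (k + 1) = k * (2 * M k + 3 * M (k - 1))

lemma IsSO3TraceMoments.unique {M N : ℕ → ℝ} (hM : IsSO3TraceMoments M)
    (hN : IsSO3TraceMoments N) : M = N := by
  have h (n : ℕ) : M n = N n ∧ M (n + 1) = N (n + 1) := by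
    induction n with
    | zero =>
      have hM1 := hM.2 0
      have hN1 := hN.2 0
      simp only [CharP.cast_eq_zero, zero_add, zero_mul] at hM1 hN1
      exact ⟨hM.1.trans hN.1.symm, by linarith⟩
    | succ n ih =>
      have hMn := hM.2 (n + 1)
      have hNn := hN.2 (n + 1)
      simp only [Nat.add_sub_cancel, ih.1, ih.2] at hMn hNn
      exact ⟨ih.2, mul_left_cancel₀ (by positivity) (hMn.trans hNn.symm)⟩
  exact funext fun n => (h n).1

instance : BorelSpace M3 := inferInstanceAs (BorelSpace (Fin 3 → Fin 3 → ℝ))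

lemma sum_sq_col_eq_one_of_mem_SO3 {R : M3} (hR : R ∈ SO3) (j : Fin 3) :
    R 0 j ^ 2 + R 1 j ^ 2 + R 2 j ^ 2 = 1 := by
  have h := congrFun (congrFun hR.1 j) j
  simp only [mul_apply, transpose_apply, Fin.sum_univ_three, one_apply_eq] at h
  linear_combination h

lemma abs_apply_le_one_of_mem_SO3 {R : M3} (hR : R ∈ SO3) (i j : Fin 3) : |R i j| ≤ 1 := by
  have h := sum_sq_col_eq_one_of_mem_SO3 hR j
  rw [← sq_le_one_iff_abs_le_one]
  fin_cases i <;> simp only [Fin.zero_eta, Fin.mk_one, Fin.reduceFinMk] <;>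
    linarith [sq_nonneg (R 0 j), sq_nonneg (R 1 j), sq_nonneg (R 2 j)]

lemma isCompact_SO3 : IsCompact SO3 := by
  have hclosed : IsClosed SO3 :=
    (isClosed_eq (by fun_prop) continuous_const).inter (isClosed_eq (by fun_prop) continuous_const)
  have hbox :
      IsCompact (Set.univ.pi fun _ : Fin 3 => Set.univ.pi fun _ : Fin 3 => Set.Icc (-1 : ℝ) 1) :=
    isCompact_univ_pi fun _ => isCompact_univ_pi fun _ => isCompact_Icc
  exact hbox.of_isClosed_subset hclosed fun R hR i _ j _ =>
    abs_le.1 (abs_apply_le_one_of_mem_SO3 hR i j)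

lemma transpose_eq_adjugate_of_mem_SO3 {R : M3} (hR : R ∈ SO3) : Rᵀ = adjugate R := by
  rw [← Matrix.inv_eq_left_inv hR.1, Matrix.inv_def, hR.2]
  simp

/-- For a rotation by the angle `θ` both sides equal `4 sin² θ`. -/
lemma sum_sq_skew_eq_of_mem_SO3 {R : M3} (hR : R ∈ SO3) :
    (R 1 2 - R 2 1) ^ 2 + (R 2 0 - R 0 2) ^ 2 + (R 0 1 - R 1 0) ^ 2
      = 3 + 2 * R.trace - R.trace ^ 2 := by
  have hcof (i : Fin 3) := congrFun (congrFun (transpose_eq_adjugate_of_mem_SO3 hR) i) i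
  have h0 := hcof 0
  have h1 := hcof 1
  have h2 := hcof 2
  simp only [transpose_apply, adjugate_fin_three, of_apply, cons_val', cons_val_zero, cons_val_one,
    cons_val, cons_val_fin_one] at h0 h1 h2
  simp only [trace_fin_three]
  linear_combination sum_sq_col_eq_one_of_mem_SO3 hR 0 + sum_sq_col_eq_one_of_mem_SO3 hR 1
    + sum_sq_col_eq_one_of_mem_SO3 hR 2 - 2 * (h0 + h1 + h2)

def rotX (u : ℝ) : M3 := !![1, 0, 0; 0, cos u, -sin u; 0, sin u, cos u]
def rotY (u : ℝ) : M3 := !![cos u, 0, sin u; 0, 1, 0; -sin u, 0, cos u]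
def rotZ (u : ℝ) : M3 := !![cos u, -sin u, 0; sin u, cos u, 0; 0, 0, 1]

lemma rotX_mem_SO3 (u : ℝ) : rotX u ∈ SO3 := by
  refine ⟨?_, by simp [rotX, det_fin_three, ← sq]⟩
  ext i j
  fin_cases i <;> fin_cases j <;>
    simp [rotX, mul_apply, Fin.sum_univ_three, ← sq, mul_comm (sin u)]

lemma rotY_mem_SO3 (u : ℝ) : rotY u ∈ SO3 := by
  refine ⟨?_, by simp [rotY, det_fin_three, ← sq]⟩
  ext i j
  fin_cases i <;> fin_cases j <;>
    simp [rotY, mul_apply, Fin.sum_univ_three, ← sq, mul_comm (sin u)]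

lemma rotZ_mem_SO3 (u : ℝ) : rotZ u ∈ SO3 := by
  refine ⟨?_, by simp [rotZ, det_fin_three, ← sq]⟩
  ext i j
  fin_cases i <;> fin_cases j <;>
    simp [rotZ, mul_apply, Fin.sum_univ_three, ← sq, mul_comm (sin u)]

lemma trace_rotX_mul (u : ℝ) (R : M3) :
    (rotX u * R).trace = R 0 0 + cos u * (R 1 1 + R 2 2) + sin u * (R 1 2 - R 2 1) := by
  simp only [rotX, trace_fin_three, mul_apply, Fin.sum_univ_three, of_apply, cons_val',
    cons_val_zero, cons_val_one, cons_val, cons_val_fin_one]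
  ring

lemma trace_rotY_mul (u : ℝ) (R : M3) :
    (rotY u * R).trace = R 1 1 + cos u * (R 0 0 + R 2 2) + sin u * (R 2 0 - R 0 2) := by
  simp only [rotY, trace_fin_three, mul_apply, Fin.sum_univ_three, of_apply, cons_val',
    cons_val_zero, cons_val_one, cons_val, cons_val_fin_one]
  ring

lemma trace_rotZ_mul (u : ℝ) (R : M3) :
    (rotZ u * R).trace = R 2 2 + cos u * (R 0 0 + R 1 1) + sin u * (R 0 1 - R 1 0) := by
  simp only [rotZ, trace_fin_three, mul_apply, Fin.sum_univ_three, of_apply, cons_val',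
    cons_val_zero, cons_val_one, cons_val, cons_val_fin_one]
  ring

section Haar

lemma integral_comp_mul_left_of_map_eq {μ : Measure M3} {Q : M3}
    (hQ : μ.map (fun R => Q * R) = μ) {f : M3 → ℝ} (hf : Continuous f) :
    ∫ R, f (Q * R) ∂μ = ∫ R, f R ∂μ := by
  conv_rhs => rw [← hQ]
  exact (integral_map (by fun_prop) hf.aestronglyMeasurable).symm

variable {μ : Measure M3} [IsFiniteMeasure μ]

lemma integral_rotation_second_variation_eq_zero (hSO3 : ∀ᵐ R ∂μ, R ∈ SO3)
    (hleft : ∀ Q ∈ SO3, μ.map (fun R => Q * R) = μ) {rot : ℝ → M3} (hrot : ∀ u, rot u ∈ SO3)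
    (hrot₀ : rot 0 = 1) {a b c : M3 → ℝ} (ha : Continuous a) (hb : Continuous b)
    (hc : Continuous c) (htr : ∀ u R, (rot u * R).trace = a R + cos u * b R + sin u * c R)
    (k : ℕ) : ∫ R, (k * R.trace ^ (k - 1) * c R ^ 2 - R.trace ^ k * b R) ∂μ = 0 := by
  have htr₀ (R : M3) : R.trace = a R + b R := by simpa [hrot₀] using htr 0 R
  simp_rw [htr₀]
  refine integral_trig_second_variation_eq_zero isCompact_SO3 hSO3 ha hb hc k fun u => ?_
  simp_rw [← htr u, ← htr₀]
  exact integral_comp_mul_left_of_map_eq (f := fun S => S.trace ^ (k + 1)) (hleft _ (hrot u))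
    (by fun_prop)

lemma isSO3TraceMoments_of_map_mul_left_eq [IsProbabilityMeasure μ] (hSO3 : ∀ᵐ R ∂μ, R ∈ SO3)
    (hleft : ∀ Q ∈ SO3, μ.map (fun R => Q * R) = μ) :
    IsSO3TraceMoments fun n => ∫ R, R.trace ^ n ∂μ := by
  refine ⟨by simp, fun k => ?_⟩
  obtain ⟨C, hC⟩ := isCompact_SO3.exists_bound_of_continuousOn (f := fun R : M3 => R.trace)
    (by fun_prop)
  refine integral_pow_recurrence_of_integral_eq_zero (by fun_prop) (hSO3.mono hC) k ?_
  have hX := integral_rotation_second_variation_eq_zero hSO3 hleft rotX_mem_SO3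
    (by simp [rotX, one_fin_three]) (by fun_prop) (by fun_prop) (by fun_prop) trace_rotX_mul k
  have hY := integral_rotation_second_variation_eq_zero hSO3 hleft rotY_mem_SO3
    (by simp [rotY, one_fin_three]) (by fun_prop) (by fun_prop) (by fun_prop) trace_rotY_mul k
  have hZ := integral_rotation_second_variation_eq_zero hSO3 hleft rotZ_mem_SO3
    (by simp [rotZ, one_fin_three]) (by fun_prop) (by fun_prop) (by fun_prop) trace_rotZ_mul k
  have hint {f : M3 → ℝ} (hf : Continuous f) : Integrable f μ :=
    hf.integrable_of_ae_mem_isCompact isCompact_SO3 hSO3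
  calc _ = ∫ R, ((k * R.trace ^ (k - 1) * (R 1 2 - R 2 1) ^ 2 - R.trace ^ k * (R 1 1 + R 2 2))
          + (k * R.trace ^ (k - 1) * (R 2 0 - R 0 2) ^ 2 - R.trace ^ k * (R 0 0 + R 2 2))
          + (k * R.trace ^ (k - 1) * (R 0 1 - R 1 0) ^ 2 - R.trace ^ k * (R 0 0 + R 1 1))) ∂μ :=
        integral_congr_ae <| hSO3.mono fun R hR => by
          linear_combination -(k * R.trace ^ (k - 1)) * sum_sq_skew_eq_of_mem_SO3 hR
            - 2 * R.trace ^ k * trace_fin_three R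
    _ = 0 := by
      rw [integral_add, integral_add, hX, hY, hZ, add_zero, add_zero]
      all_goals exact hint (by fun_prop)

end Haar

/-- The law of the rotation angle of a Haar-random rotation (Weyl's integration formula); it is
compared with the Haar measure only through its trace moments. -/
def rotationAngleMeasure : Measure ℝ :=
  (volume.restrict (Set.Ioc 0 π)).withDensity fun ρ => ENNReal.ofReal ((1 - cos ρ) / π)

lemma integral_rotationAngleMeasure (f : ℝ → ℝ) :
    ∫ ρ, f ρ ∂rotationAngleMeasure = (1 / π) * ∫ ρ in 0..π, f ρ * (1 - cos ρ) := by
  have hdens (ρ : ℝ) : 0 ≤ (1 - cos ρ) / π := div_nonneg (by linarith [cos_le_one ρ]) pi_pos.le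
  rw [rotationAngleMeasure, integral_withDensity_eq_integral_toReal_smul (by fun_prop)
    (ae_of_all _ fun _ => ENNReal.ofReal_lt_top), intervalIntegral.integral_of_le pi_pos.le,
    ← integral_const_mul]
  congr 1; funext ρ
  rw [ENNReal.toReal_ofReal (hdens ρ), smul_eq_mul]
  ring

instance : IsFiniteMeasure rotationAngleMeasure :=
  isFiniteMeasure_withDensity_ofReal <|
    ((by fun_prop : Continuous fun ρ => (1 - cos ρ) / π).intervalIntegrable 0 π).1.hasFiniteIntegral

lemma abs_one_add_two_mul_cos_le (ρ : ℝ) : |1 + 2 * cos ρ| ≤ 3 := by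
  rw [abs_le]; constructor <;> linarith [neg_one_le_cos ρ, cos_le_one ρ]

lemma isSO3TraceMoments_rotationAngle :
    IsSO3TraceMoments fun n => ∫ ρ, (1 + 2 * cos ρ) ^ n ∂rotationAngleMeasure := by
  refine ⟨?_, fun k => ?_⟩
  · simp only [pow_zero, one_mul, integral_rotationAngleMeasure]
    rw [intervalIntegral.integral_sub intervalIntegrable_const
      (continuous_cos.intervalIntegrable 0 π), integral_cos]
    simp [pi_ne_zero]
  refine integral_pow_recurrence_of_integral_eq_zero (by fun_prop)
    (ae_of_all _ abs_one_add_two_mul_cos_le) k ?_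
  set F : ℝ → ℝ := fun ρ => sin ρ * (1 - cos ρ) * (1 + 2 * cos ρ) ^ k
  have hF (ρ : ℝ) : HasDerivAt F (-(1 / 2) * ((k * (1 + 2 * cos ρ) ^ (k - 1)
      * (3 + 2 * (1 + 2 * cos ρ) - (1 + 2 * cos ρ) ^ 2) - 2 * (1 + 2 * cos ρ) ^ (k + 1))
      * (1 - cos ρ))) ρ := by
    have h := ((hasDerivAt_sin ρ).mul ((hasDerivAt_cos ρ).const_sub 1)).mul
      ((((hasDerivAt_cos ρ).const_mul 2).const_add 1).pow k)
    refine h.congr_deriv ?_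
    simp only [Pi.mul_apply, Pi.pow_apply]
    linear_combination ((1 + 2 * cos ρ) ^ k - 2 * k * (1 - cos ρ) * (1 + 2 * cos ρ) ^ (k - 1))
      * sin_sq_add_cos_sq ρ
  have hFTC := intervalIntegral.integral_eq_sub_of_hasDerivAt (a := 0) (b := π)
    (fun ρ _ => hF ρ) ((by fun_prop : Continuous _).intervalIntegrable 0 π)
  simp only [intervalIntegral.integral_const_mul, F, sin_pi, sin_zero, zero_mul, sub_zero,
    mul_eq_zero, neg_eq_zero, one_div, inv_eq_zero, OfNat.ofNat_ne_zero, false_or] at hFTC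
  rw [integral_rotationAngleMeasure, hFTC, mul_zero]

lemma besselI0_sub_besselI1 (x : ℝ) :
    besselI0 x - besselI1 x = (1 / π) * ∫ θ in 0..π, exp (x * cos θ) * (1 - cos θ) := by
  have hsplit : (fun θ => exp (x * cos θ) * (1 - cos θ))
      = fun θ => exp (x * cos θ) - cos θ * exp (x * cos θ) := by
    funext θ; ring
  rw [besselI0, besselI1, ← mul_sub, hsplit, intervalIntegral.integral_sub
    ((by fun_prop : Continuous _).intervalIntegrable 0 π)
    ((by fun_prop : Continuous _).intervalIntegrable 0 π)]

lemma integral_exp_mul_trace_eq {μ : Measure M3} [IsProbabilityMeasure μ]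
    (hSO3 : ∀ᵐ R ∂μ, R ∈ SO3) (hleft : ∀ Q ∈ SO3, μ.map (fun R => Q * R) = μ) (s : ℝ) :
    ∫ R, exp (s * R.trace) ∂μ = (exp s / π) * ∫ ρ in 0..π, exp (2 * s * cos ρ) * (1 - cos ρ) := by
  have hmoments (n : ℕ) : ∫ R, R.trace ^ n ∂μ = ∫ ρ, (1 + 2 * cos ρ) ^ n ∂rotationAngleMeasure :=
    congrFun ((isSO3TraceMoments_of_map_mul_left_eq hSO3 hleft).unique
      isSO3TraceMoments_rotationAngle) n
  obtain ⟨C, hC⟩ := isCompact_SO3.exists_bound_of_continuousOn (f := fun R : M3 => R.trace)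
    (by fun_prop)
  have hsplit : (fun ρ => exp (s * (1 + 2 * cos ρ)) * (1 - cos ρ))
      = fun ρ => exp s * (exp (2 * s * cos ρ) * (1 - cos ρ)) := by
    funext ρ; rw [show s * (1 + 2 * cos ρ) = s + 2 * s * cos ρ by ring, exp_add]; ring
  calc ∫ R, exp (s * R.trace) ∂μ
      = ∑' n : ℕ, s ^ n / n ! * ∫ R, R.trace ^ n ∂μ :=
        integral_exp_mul_eq_tsum (by fun_prop) (hSO3.mono hC) s
    _ = ∫ ρ, exp (s * (1 + 2 * cos ρ)) ∂rotationAngleMeasure := by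
        simp only [hmoments]
        exact (integral_exp_mul_eq_tsum (by fun_prop)
          (ae_of_all _ abs_one_add_two_mul_cos_le) s).symm
    _ = (exp s / π) * ∫ ρ in 0..π, exp (2 * s * cos ρ) * (1 - cos ρ) := by
        rw [integral_rotationAngleMeasure, hsplit, intervalIntegral.integral_const_mul]
        ring

theorem matrixFisher_normalizing_isotropic_general
    (μ : Measure M3) [IsProbabilityMeasure μ] (hsupp : μ SO3ᶜ = 0)
    (hleft : ∀ Q ∈ SO3, μ.map (fun R => Q * R) = μ)
    (s : ℝ) :
    mfC μ (s • (1 : M3)) = ∫ R, Real.exp (s * R.trace) ∂μ ∧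
    mfC μ (s • (1 : M3)) =
      (Real.exp s / Real.pi) *
        ∫ ρ in (0:ℝ)..Real.pi, Real.exp (2 * s * Real.cos ρ) * (1 - Real.cos ρ) ∧
    mfC μ (s • (1 : M3)) = Real.exp s * (besselI0 (2 * s) - besselI1 (2 * s)) := by
  have hmfC : mfC μ (s • (1 : M3)) = ∫ R, exp (s * R.trace) ∂μ := by simp [mfC]
  have hangle := integral_exp_mul_trace_eq (mem_ae_iff.2 hsupp) hleft s
  refine ⟨hmfC, hmfC.trans hangle, ?_⟩
  rw [hmfC, hangle, besselI0_sub_besselI1]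
  ring

/-- For every `s ≥ 0`, the normalizing constant of the matrix
Fisher distribution with parameter `sI₃` is
`c(sI₃) = ∫_{SO(3)} exp(s·tr R) dR = (e^s/π)·∫₀^π exp(2s cos ρ)(1 − cos ρ) dρ`;
equivalently, `c(sI₃) = e^s (I₀(2s) − I₁(2s))`. -/
theorem matrixFisher_normalizing_isotropic
    (μ : Measure M3) [IsProbabilityMeasure μ] (hsupp : μ SO3ᶜ = 0)
    (hleft : ∀ Q ∈ SO3, μ.map (fun R => Q * R) = μ)
    (hright : ∀ Q ∈ SO3, μ.map (fun R => R * Q) = μ)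
    (s : ℝ) (hs : 0 ≤ s) :
    mfC μ (s • (1 : M3)) = ∫ R, Real.exp (s * R.trace) ∂μ ∧
    mfC μ (s • (1 : M3)) =
      (Real.exp s / Real.pi) *
        ∫ ρ in (0:ℝ)..Real.pi, Real.exp (2 * s * Real.cos ρ) * (1 - Real.cos ρ) ∧
    mfC μ (s • (1 : M3)) = Real.exp s * (besselI0 (2 * s) - besselI1 (2 * s)) :=
  matrixFisher_normalizing_isotropic_general μ hsupp hleft s

end
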